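/- arXiv:1901.07648 — 2 statements merged into one kernel-verified Lean document; each statement's English description precedes it below -/
import Mathlib

section
/- Suppose F = (1/n) Σ_{i=1}^n f_i is average-L-smooth. Consider a single outer-loop iteration of SARAH with learning rate η satisfying 0 < η ≤ 2/(L(√(1+4m)+1)). Then for any outer iteration s ≥ 1, E[F(w_{m+1}^{(s)})] ≤ E[F(w_0^{(s)})] − (η/2) Σ_{t=0}^{m} E[‖∇F(w_t^{(s)})‖²]. -/
noncomputable section

abbrev Vec (d : ℕ) : Type := EuclideanSpace ℝ (Fin d)

/-- One inner loop of SARAH: `(innerSeq d n f F η x0 ι t) = (w_t, v_t)`, where the step from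
`t` to `t+1` uses the sampled index `ι t` (so `ι t` plays the role of `i_{t+1}`). -/
noncomputable def innerSeq (d n : ℕ) (f : Fin n → Vec d → ℝ) (F : Vec d → ℝ) (η : ℝ)
    (x0 : Vec d) (ι : ℕ → Fin n) : ℕ → Vec d × Vec d
  | 0 => (x0, gradient F x0)
  | t + 1 =>
    let p := innerSeq d n f F η x0 ι t
    let w := p.1 - η • p.2
    (w, gradient (f (ι t)) w - gradient (f (ι t)) p.1 + p.2)

/-- Outer iterates of SARAH: `outerSeq d n m f F η w0 ω s = w̃_s`, where the `s`-th outer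
loop uses the index sequence `ω s` and `w̃_s = w_{m+1}^{(s)}`. -/
noncomputable def outerSeq (d n m : ℕ) (f : Fin n → Vec d → ℝ) (F : Vec d → ℝ) (η : ℝ)
    (w0 : Vec d) (ω : ℕ → ℕ → Fin n) : ℕ → Vec d
  | 0 => w0
  | s + 1 => (innerSeq d n f F η (outerSeq d n m f F η w0 ω s) (ω s) (m + 1)).1

/-- Expectation over the uniformly random index sequences of SARAH with (at least) `S` outer
loops of `m` inner steps each: the average of `X` over all `ω : Fin S → Fin m → Fin n`,
extended by a dummy index outside this range. -/
noncomputable def sarahE (n m S : ℕ) (hn : 0 < n) (X : (ℕ → ℕ → Fin n) → ℝ) : ℝ :=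
  (∑ ω : Fin S → Fin m → Fin n,
      X fun s t => if h : s < S ∧ t < m then ω ⟨s, h.1⟩ ⟨t, h.2⟩ else ⟨0, hn⟩) /
    (Fintype.card (Fin S → Fin m → Fin n) : ℝ)

/-!
Each inner step `w_{t+1} = w_t - η v_t` is a gradient step with the estimate `v_t`, so the
descent lemma for the `L`-Lipschitz gradient `∇F` gives
`F(w_{t+1}) ≤ F(w_t) - η/2 ‖∇F(w_t)‖² - η/2 (1 - Lη) ‖v_t‖² + η/2 ‖∇F(w_t) - v_t‖²`.
Averaged over the fresh index, the new error `∇F(w_{t+1}) - v_{t+1}` is the old one plus a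
centred term of second moment at most `L²η² ‖v_t‖²`, hence
`E‖∇F(w_t) - v_t‖² ≤ L²η² Σ_{j<t} E‖v_j‖²` (the error vanishes at `t = 0`).
Summed over `t ≤ m`, the error terms cost at most `η/2 · m L²η² Σ_t E‖v_t‖²`, which the step-size
condition, equivalent to `m (Lη)² + Lη ≤ 1`, absorbs into the `‖v_t‖²` terms.
The earlier outer loops only determine the starting point `w_0^{(s)}`, so the expectation
is an average over them of the inner-loop average.
-/

open Finset RealInnerProductSpace

section InnerProductSpace

variable {ι E : Type*} [NormedAddCommGroup E] [InnerProductSpace ℝ E]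

section Mean

variable [Fintype ι]

theorem sum_norm_add_mean_sub_sq (c : E) (X : ι → E) :
    ∑ i, ‖c + (Fintype.card ι : ℝ)⁻¹ • ∑ j, X j - X i‖ ^ 2
      = Fintype.card ι * ‖c‖ ^ 2 - Fintype.card ι * ‖(Fintype.card ι : ℝ)⁻¹ • ∑ j, X j‖ ^ 2
        + ∑ i, ‖X i‖ ^ 2 := by
  set N : ℝ := (Fintype.card ι : ℝ)
  set μ : E := N⁻¹ • ∑ j, X j
  have hsum : ∑ j, X j = N • μ := by
    rcases isEmpty_or_nonempty ι with hι | hι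
    · simp [μ]
    · rw [smul_inv_smul₀ (by positivity)]
  simp_rw [norm_sub_sq_real (c + μ)]
  rw [sum_add_distrib, sum_sub_distrib, ← mul_sum, ← inner_sum, hsum, real_inner_smul_right,
    norm_add_sq_real, inner_add_left, real_inner_self_eq_norm_sq]
  simp only [sum_const, card_univ, nsmul_eq_mul, N]
  ring

theorem norm_mean_sq_le (X : ι → E) :
    ‖(Fintype.card ι : ℝ)⁻¹ • ∑ j, X j‖ ^ 2 ≤ (∑ i, ‖X i‖ ^ 2) / Fintype.card ι := by
  rcases isEmpty_or_nonempty ι with hι | hι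
  · simp
  have h := sum_norm_add_mean_sub_sq 0 X
  simp only [zero_add, norm_zero] at h
  rw [le_div_iff₀' (by positivity)]
  have : 0 ≤ ∑ i, ‖(Fintype.card ι : ℝ)⁻¹ • ∑ j, X j - X i‖ ^ 2 := by positivity
  linarith

theorem sum_norm_add_mean_sub_sq_le (c : E) (X : ι → E) :
    ∑ i, ‖c + (Fintype.card ι : ℝ)⁻¹ • ∑ j, X j - X i‖ ^ 2
      ≤ Fintype.card ι * ‖c‖ ^ 2 + ∑ i, ‖X i‖ ^ 2 := by
  rw [sum_norm_add_mean_sub_sq]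
  have : 0 ≤ (Fintype.card ι : ℝ) * ‖(Fintype.card ι : ℝ)⁻¹ • ∑ j, X j‖ ^ 2 := by positivity
  linarith

end Mean

variable [CompleteSpace E]

theorem le_add_inner_gradient_add_sq_of_lipschitz {F : E → ℝ} (hF : Differentiable ℝ F) {L : ℝ}
    (hlip : ∀ a b, ‖gradient F a - gradient F b‖ ≤ L * ‖a - b‖) (x y : E) :
    F y ≤ F x + ⟪gradient F x, y - x⟫ + L / 2 * ‖y - x‖ ^ 2 := by
  set v := y - x
  -- `φ' ≤ 0` on `[0, 1]` by Cauchy–Schwarz and the Lipschitz bound; compare `φ 1` with `φ 0`.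
  set φ : ℝ → ℝ := fun t => F (x + t • v) - t * ⟪gradient F x, v⟫ - t ^ 2 * (L / 2 * ‖v‖ ^ 2)
  have hφ : ∀ t, HasDerivAt φ
      (⟪gradient F (x + t • v), v⟫ - ⟪gradient F x, v⟫ - t * (L * ‖v‖ ^ 2)) t := by
    intro t
    have hline : HasDerivAt (fun t : ℝ => x + t • v) v t := by
      simpa using ((hasDerivAt_id t).smul_const v).const_add x
    have hF' := (hF (x + t • v)).hasGradientAt.hasFDerivAt.comp_hasDerivAt t hline
    simp only [InnerProductSpace.toDual_apply_apply] at hF'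
    refine ((hF'.sub ((hasDerivAt_id t).mul_const ⟪gradient F x, v⟫)).sub
      ((hasDerivAt_pow 2 t).mul_const (L / 2 * ‖v‖ ^ 2))).congr_deriv ?_
    simp only [Nat.cast_ofNat, Nat.add_one_sub_one, pow_one]
    ring
  have hanti : AntitoneOn φ (Set.Icc 0 1) := by
    refine antitoneOn_of_deriv_nonpos (convex_Icc 0 1)
      (fun t _ => (hφ t).continuousAt.continuousWithinAt)
      (fun t _ => (hφ t).differentiableAt.differentiableWithinAt) fun t ht => ?_
    rw [interior_Icc] at ht
    have hcs := real_inner_le_norm (gradient F (x + t • v) - gradient F x) v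
    have hl : ‖gradient F (x + t • v) - gradient F x‖ ≤ L * (t * ‖v‖) := by
      simpa [norm_smul, abs_of_nonneg ht.1.le] using hlip (x + t • v) x
    rw [(hφ t).deriv, ← inner_sub_left]
    nlinarith [mul_le_mul_of_nonneg_right hl (norm_nonneg v)]
  have h01 := hanti (Set.left_mem_Icc.mpr zero_le_one) (Set.right_mem_Icc.mpr zero_le_one)
    zero_le_one
  simp only [φ, one_smul, zero_smul, add_zero, one_mul, zero_mul, sub_zero, one_pow,
    ne_eq, OfNat.ofNat_ne_zero, not_false_eq_true, zero_pow, v, add_sub_cancel] at h01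
  linarith

theorem apply_sub_smul_le_of_lipschitz {F : E → ℝ} (hF : Differentiable ℝ F) {L : ℝ}
    (hlip : ∀ a b, ‖gradient F a - gradient F b‖ ≤ L * ‖a - b‖) (w v : E) (η : ℝ) :
    F (w - η • v) ≤ F w - η / 2 * ‖gradient F w‖ ^ 2 - η / 2 * (1 - L * η) * ‖v‖ ^ 2
      + η / 2 * ‖gradient F w - v‖ ^ 2 := by
  have h := le_add_inner_gradient_add_sq_of_lipschitz hF hlip w (w - η • v)
  rw [sub_sub_cancel_left, inner_neg_right, real_inner_smul_right, norm_neg, norm_smul,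
    Real.norm_eq_abs, mul_pow, sq_abs] at h
  rw [norm_sub_sq_real]
  linear_combination h

def sarahStep (f : ι → E → ℝ) (η : ℝ) (i : ι) (p : E × E) : E × E :=
  (p.1 - η • p.2, gradient (f i) (p.1 - η • p.2) - gradient (f i) p.1 + p.2)

section Mean

variable [Fintype ι]

theorem hasGradientAt_of_eq_mean {f : ι → E → ℝ} {F : E → ℝ}
    (hF : ∀ w, F w = (∑ i, f i w) / Fintype.card ι) (hf : ∀ i, Differentiable ℝ (f i)) (w : E) :
    HasGradientAt F ((Fintype.card ι : ℝ)⁻¹ • ∑ i, gradient (f i) w) w := by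
  have hsum : HasFDerivAt (fun w => ∑ i, f i w) (∑ i, fderiv ℝ (f i) w) w :=
    HasFDerivAt.fun_sum fun i _ => (hf i w).hasFDerivAt
  have := hsum.const_smul (Fintype.card ι : ℝ)⁻¹
  rw [hasFDerivAt_iff_hasGradientAt] at this
  convert this using 1
  · ext w
    simp [hF, div_eq_inv_mul]
  · simp only [gradient, map_smulₛₗ, map_sum, starRingEnd_apply, star_trivial]

theorem norm_gradient_sub_le_of_eq_mean {f : ι → E → ℝ} {F : E → ℝ}
    (hF : ∀ w, F w = (∑ i, f i w) / Fintype.card ι) (hf : ∀ i, Differentiable ℝ (f i))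
    {L : ℝ} (hL : 0 ≤ L)
    (havg : ∀ w w', (∑ i, ‖gradient (f i) w - gradient (f i) w'‖ ^ 2) / Fintype.card ι
      ≤ L ^ 2 * ‖w - w'‖ ^ 2) (w w' : E) :
    ‖gradient F w - gradient F w'‖ ≤ L * ‖w - w'‖ := by
  rw [(hasGradientAt_of_eq_mean hF hf w).gradient, (hasGradientAt_of_eq_mean hF hf w').gradient,
    ← smul_sub, ← sum_sub_distrib]
  refine pow_le_pow_iff_left₀ (norm_nonneg _) (by positivity) two_ne_zero |>.mp ?_
  rw [mul_pow]
  exact (norm_mean_sq_le _).trans (havg w w')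

theorem sum_norm_gradient_sub_sarahStep_le {f : ι → E → ℝ} {F : E → ℝ}
    (hF : ∀ w, F w = (∑ i, f i w) / Fintype.card ι) (hf : ∀ i, Differentiable ℝ (f i)) {L : ℝ}
    (havg : ∀ w w', (∑ i, ‖gradient (f i) w - gradient (f i) w'‖ ^ 2) / Fintype.card ι
      ≤ L ^ 2 * ‖w - w'‖ ^ 2) (η : ℝ) (p : E × E) :
    ∑ i, ‖gradient F (sarahStep f η i p).1 - (sarahStep f η i p).2‖ ^ 2
      ≤ Fintype.card ι * (‖gradient F p.1 - p.2‖ ^ 2 + L ^ 2 * η ^ 2 * ‖p.2‖ ^ 2) := by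
  obtain ⟨w, v⟩ := p
  set w' := w - η • v
  set X : ι → E := fun i => gradient (f i) w' - gradient (f i) w
  -- `∇F w' - ∇F w` is the mean of the `X i`, so the error changes by a centred term.
  have hdecomp : ∀ i, gradient F w' - (gradient (f i) w' - gradient (f i) w + v)
      = (gradient F w - v) + (Fintype.card ι : ℝ)⁻¹ • ∑ j, X j - X i := by
    intro i
    rw [(hasGradientAt_of_eq_mean hF hf w').gradient, (hasGradientAt_of_eq_mean hF hf w).gradient]
    simp only [X, sum_sub_distrib, smul_sub]
    abel
  have hX : ∑ i, ‖X i‖ ^ 2 ≤ Fintype.card ι * (L ^ 2 * η ^ 2 * ‖v‖ ^ 2) := by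
    rcases isEmpty_or_nonempty ι with hι | hι
    · simp
    rw [← div_le_iff₀' (by positivity)]
    have hw : ‖w' - w‖ ^ 2 = η ^ 2 * ‖v‖ ^ 2 := by
      rw [sub_sub_cancel_left, norm_neg, norm_smul, Real.norm_eq_abs, mul_pow, sq_abs]
    simpa only [hw, mul_assoc] using havg w' w
  change ∑ i, ‖gradient F w' - (gradient (f i) w' - gradient (f i) w + v)‖ ^ 2 ≤ _
  simp only [hdecomp]
  linear_combination sum_norm_add_mean_sub_sq_le (gradient F w - v) X + hX

end Mean

end InnerProductSpace

section Sequences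

variable {κ α M : Type*} [Fintype κ] [DecidableEq κ] [Fintype α] [AddCommMonoid M]

theorem sum_sum_update_eq_card_smul (g : (κ → α) → M) (k : κ) :
    ∑ σ, ∑ a, g (Function.update σ k a) = Fintype.card α • ∑ σ, g σ := by
  set e := Equiv.funSplitAt k α
  have hupd : ∀ b a r, Function.update (e.symm (b, r)) k a = e.symm (a, r) := by
    intro b a r
    ext j
    by_cases hj : j = k
    · subst hj; simp [e]
    · simp [e, hj]
  rw [← e.symm.sum_comp, ← e.symm.sum_comp, Fintype.sum_prod_type, Fintype.sum_prod_type]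
  simp only [hupd, sum_const, card_univ]
  rw [sum_comm]

theorem Fin.sum_init_last {s : ℕ} {β : Type*} [Fintype β] (h : (Fin s → β) → β → M) :
    ∑ ω : Fin (s + 1) → β, h (Fin.init ω) (ω (Fin.last s)) = ∑ p, ∑ b, h p b := by
  rw [← (Fin.snocEquiv fun _ => β).sum_comp, Fintype.sum_prod_type, sum_comm]
  have hinit : ∀ (p : Fin s → β) b, Fin.init ((Fin.snocEquiv fun _ => β) (b, p)) = p :=
    fun p b => by simp [Fin.snocEquiv]
  simp only [hinit, Fin.snocEquiv_apply, Fin.snoc_last]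

end Sequences

theorem le_add_sum_range_of_succ_le {α : Type*} [AddCommMonoid α] [PartialOrder α]
    [IsOrderedAddMonoid α] {a b : ℕ → α} {T : ℕ} (h : ∀ t < T, a (t + 1) ≤ a t + b t) :
    a T ≤ a 0 + ∑ t ∈ range T, b t := by
  induction T with
  | zero => simp
  | succ T ih =>
    rw [sum_range_succ, ← add_assoc]
    exact (h T (Nat.lt_succ_self T)).trans
      (add_le_add_left (ih fun t ht => h t (ht.trans (Nat.lt_succ_self T))) _)

theorem sum_range_succ_sum_range_le {B : ℕ → ℝ} (hB : ∀ j, 0 ≤ B j) (m : ℕ) :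
    ∑ t ∈ range (m + 1), ∑ j ∈ range t, B j ≤ m * ∑ j ∈ range (m + 1), B j := by
  rw [sum_range_succ', sum_range_zero, add_zero]
  calc ∑ t ∈ range m, ∑ j ∈ range (t + 1), B j ≤ ∑ _t ∈ range m, ∑ j ∈ range (m + 1), B j :=
        sum_le_sum fun t ht => sum_le_sum_of_subset_of_nonneg
          (range_subset_range.mpr (by simp at ht; omega)) fun j _ _ => hB j
    _ = m * ∑ j ∈ range (m + 1), B j := by rw [sum_const, card_range, nsmul_eq_mul]

theorem mul_sq_add_le_one {c x : ℝ} (hc : 0 ≤ c) (hx0 : 0 ≤ x)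
    (hx : x ≤ 2 / (Real.sqrt (1 + 4 * c) + 1)) : c * x ^ 2 + x ≤ 1 := by
  set r := Real.sqrt (1 + 4 * c)
  have hr2 : r ^ 2 = 1 + 4 * c := Real.sq_sqrt (by linarith)
  have hr1 : 1 ≤ r := Real.one_le_sqrt.mpr (by linarith)
  rw [le_div_iff₀ (by linarith)] at hx
  -- `2 / (r + 1)` is the positive root of `c x² + x = 1`, as `(r - 1) (r + 1) = 4 c`.
  nlinarith [mul_nonneg (sub_nonneg.mpr hx) (by nlinarith : 0 ≤ (r - 1) * x + 2)]

section InnerLoop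

variable {d n m : ℕ} {f : Fin n → Vec d → ℝ} {F : Vec d → ℝ} {η : ℝ} {x0 : Vec d}

def padIndex {α : Type*} (a : α) (σ : Fin m → α) : ℕ → α :=
  fun t => if h : t < m then σ ⟨t, h⟩ else a

theorem innerSeq_succ (ι : ℕ → Fin n) (t : ℕ) :
    innerSeq d n f F η x0 ι (t + 1) = sarahStep f η (ι t) (innerSeq d n f F η x0 ι t) :=
  rfl

theorem innerSeq_congr {ι ι' : ℕ → Fin n} :
    ∀ {t : ℕ}, (∀ k < t, ι k = ι' k) → innerSeq d n f F η x0 ι t = innerSeq d n f F η x0 ι' t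
  | 0, _ => rfl
  | t + 1, h => by
    rw [innerSeq_succ, innerSeq_succ, h t t.lt_succ_self,
      innerSeq_congr fun k hk => h k (hk.trans t.lt_succ_self)]

theorem innerSeq_padIndex_update (a : Fin n) (σ : Fin m → Fin n) (k : Fin m) (i : Fin n) :
    innerSeq d n f F η x0 (padIndex a (Function.update σ k i)) (k + 1)
      = sarahStep f η i (innerSeq d n f F η x0 (padIndex a σ) k) := by
  have hprefix : innerSeq d n f F η x0 (padIndex a (Function.update σ k i)) k
      = innerSeq d n f F η x0 (padIndex a σ) k := innerSeq_congr fun j hj => by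
    have hjk : (⟨j, hj.trans k.isLt⟩ : Fin m) ≠ k := Fin.ne_of_val_ne hj.ne
    simp [padIndex, hj.trans k.isLt, hjk]
  rw [innerSeq_succ, hprefix]
  simp [padIndex]

theorem sum_innerSeq_succ (a : Fin n) (H : Vec d × Vec d → ℝ) (k : Fin m) :
    n * ∑ σ : Fin m → Fin n, H (innerSeq d n f F η x0 (padIndex a σ) (k + 1))
      = ∑ σ : Fin m → Fin n, ∑ i, H (sarahStep f η i (innerSeq d n f F η x0 (padIndex a σ) k)) := by
  have := sum_sum_update_eq_card_smul (fun σ => H (innerSeq d n f F η x0 (padIndex a σ) (k + 1))) k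
  simp only [innerSeq_padIndex_update, Fintype.card_fin, nsmul_eq_mul] at this
  exact this.symm

theorem sum_norm_gradient_sub_innerSeq_succ_le (hF : ∀ w, F w = (∑ i, f i w) / n)
    (hdiff : ∀ i, Differentiable ℝ (f i)) {L : ℝ}
    (havg : ∀ w w' : Vec d,
      (∑ i, ‖gradient (f i) w - gradient (f i) w'‖ ^ 2) / n ≤ L ^ 2 * ‖w - w'‖ ^ 2)
    (a : Fin n) {t : ℕ} (ht : t < m) :
    ∑ σ : Fin m → Fin n, ‖gradient F (innerSeq d n f F η x0 (padIndex a σ) (t + 1)).1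
        - (innerSeq d n f F η x0 (padIndex a σ) (t + 1)).2‖ ^ 2
      ≤ ∑ σ : Fin m → Fin n, ‖gradient F (innerSeq d n f F η x0 (padIndex a σ) t).1
          - (innerSeq d n f F η x0 (padIndex a σ) t).2‖ ^ 2
        + L ^ 2 * η ^ 2 *
          ∑ σ : Fin m → Fin n, ‖(innerSeq d n f F η x0 (padIndex a σ) t).2‖ ^ 2 := by
  have hn : (0 : ℝ) < n := by exact_mod_cast a.pos
  refine le_of_mul_le_mul_left ?_ hn
  rw [sum_innerSeq_succ a (fun p => ‖gradient F p.1 - p.2‖ ^ 2) ⟨t, ht⟩]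
  simp only [mul_sum, ← sum_add_distrib]
  refine sum_le_sum fun σ _ => ?_
  simpa using sum_norm_gradient_sub_sarahStep_le (by simpa using hF) hdiff (by simpa using havg) η _

theorem sum_range_sum_norm_gradient_sub_innerSeq_le (hF : ∀ w, F w = (∑ i, f i w) / n)
    (hdiff : ∀ i, Differentiable ℝ (f i)) {L : ℝ}
    (havg : ∀ w w' : Vec d,
      (∑ i, ‖gradient (f i) w - gradient (f i) w'‖ ^ 2) / n ≤ L ^ 2 * ‖w - w'‖ ^ 2)
    (a : Fin n) :
    ∑ t ∈ range (m + 1), ∑ σ : Fin m → Fin n,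
        ‖gradient F (innerSeq d n f F η x0 (padIndex a σ) t).1
          - (innerSeq d n f F η x0 (padIndex a σ) t).2‖ ^ 2
      ≤ L ^ 2 * η ^ 2 * (m * ∑ t ∈ range (m + 1),
          ∑ σ : Fin m → Fin n, ‖(innerSeq d n f F η x0 (padIndex a σ) t).2‖ ^ 2) := by
  set C : ℕ → ℝ := fun t => ∑ σ : Fin m → Fin n,
    ‖gradient F (innerSeq d n f F η x0 (padIndex a σ) t).1
      - (innerSeq d n f F η x0 (padIndex a σ) t).2‖ ^ 2
  set B : ℕ → ℝ := fun t => ∑ σ : Fin m → Fin n, ‖(innerSeq d n f F η x0 (padIndex a σ) t).2‖ ^ 2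
  have hC0 : C 0 = 0 := by simp [C, innerSeq]
  have hC : ∀ t ≤ m, C t ≤ L ^ 2 * η ^ 2 * ∑ j ∈ range t, B j := fun t ht => by
    simpa [hC0, mul_sum] using
      le_add_sum_range_of_succ_le (a := C) (b := fun j => L ^ 2 * η ^ 2 * B j) fun j hj => sum_norm_gradient_sub_innerSeq_succ_le hF hdiff havg a (by omega)
  calc ∑ t ∈ range (m + 1), C t ≤ ∑ t ∈ range (m + 1), L ^ 2 * η ^ 2 * ∑ j ∈ range t, B j :=
        sum_le_sum fun t ht => hC t (Nat.lt_succ_iff.mp (mem_range.mp ht))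
    _ ≤ L ^ 2 * η ^ 2 * (m * ∑ t ∈ range (m + 1), B t) := by
        rw [← mul_sum]
        exact mul_le_mul_of_nonneg_left
          (sum_range_succ_sum_range_le (fun j => by positivity) m) (by positivity)

theorem sum_apply_innerSeq_le (hF : ∀ w, F w = (∑ i, f i w) / n)
    (hdiff : ∀ i, Differentiable ℝ (f i)) {L : ℝ} (hL : 0 < L)
    (havg : ∀ w w' : Vec d,
      (∑ i, ‖gradient (f i) w - gradient (f i) w'‖ ^ 2) / n ≤ L ^ 2 * ‖w - w'‖ ^ 2)
    (hη0 : 0 < η) (hη : η ≤ 2 / (L * (Real.sqrt (1 + 4 * (m : ℝ)) + 1))) (a : Fin n) :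
    ∑ σ : Fin m → Fin n, F (innerSeq d n f F η x0 (padIndex a σ) (m + 1)).1
      ≤ ∑ _σ : Fin m → Fin n, F x0 - η / 2 * ∑ t ∈ range (m + 1),
          ∑ σ : Fin m → Fin n, ‖gradient F (innerSeq d n f F η x0 (padIndex a σ) t).1‖ ^ 2 := by
  have hF' : ∀ w, F w = (∑ i, f i w) / Fintype.card (Fin n) := by simpa using hF
  have hFd : Differentiable ℝ F := fun w => (hasGradientAt_of_eq_mean hF' hdiff w).differentiableAt
  have hlip := norm_gradient_sub_le_of_eq_mean hF' hdiff hL.le (by simpa using havg)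
  set W : ℕ → (Fin m → Fin n) → Vec d × Vec d := fun t σ => innerSeq d n f F η x0 (padIndex a σ) t
  set A : ℕ → ℝ := fun t => ∑ σ, ‖gradient F (W t σ).1‖ ^ 2
  set B : ℕ → ℝ := fun t => ∑ σ, ‖(W t σ).2‖ ^ 2
  set C : ℕ → ℝ := fun t => ∑ σ, ‖gradient F (W t σ).1 - (W t σ).2‖ ^ 2
  have hdesc : ∑ σ, F (W (m + 1) σ).1 ≤ ∑ σ, F (W 0 σ).1
      + ∑ t ∈ range (m + 1), (η / 2 * C t - η / 2 * A t - η / 2 * (1 - L * η) * B t) := by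
    refine le_add_sum_range_of_succ_le (a := fun t => ∑ σ, F (W t σ).1) fun t _ => ?_
    calc ∑ σ, F (W (t + 1) σ).1
        ≤ ∑ σ, (F (W t σ).1 - η / 2 * ‖gradient F (W t σ).1‖ ^ 2
            - η / 2 * (1 - L * η) * ‖(W t σ).2‖ ^ 2
            + η / 2 * ‖gradient F (W t σ).1 - (W t σ).2‖ ^ 2) :=
          sum_le_sum fun σ _ => apply_sub_smul_le_of_lipschitz hFd hlip _ _ η
      _ = _ := by
          simp only [A, B, C, sum_add_distrib, sum_sub_distrib, mul_sum]
          ring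
  have hC : ∑ t ∈ range (m + 1), C t ≤ L ^ 2 * η ^ 2 * (m * ∑ t ∈ range (m + 1), B t) :=
    sum_range_sum_norm_gradient_sub_innerSeq_le hF hdiff havg a
  have hcoef : m * (L * η) ^ 2 + L * η ≤ 1 := by
    refine mul_sq_add_le_one (Nat.cast_nonneg m) (by positivity) ?_
    rw [le_div_iff₀ (by positivity)]
    rw [le_div_iff₀ (by positivity)] at hη
    linarith
  simp only [sum_sub_distrib, ← mul_sum] at hdesc
  change ∑ σ, F (W (m + 1) σ).1 ≤ ∑ σ, F (W 0 σ).1 - η / 2 * ∑ t ∈ range (m + 1), A t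
  linarith [mul_le_mul_of_nonneg_left hC (by positivity : (0 : ℝ) ≤ η / 2),
    mul_le_mul_of_nonneg_right hcoef (by positivity : (0 : ℝ) ≤ η / 2 * ∑ t ∈ range (m + 1), B t)]

end InnerLoop

section OuterLoop

variable {d n m : ℕ} {f : Fin n → Vec d → ℝ} {F : Vec d → ℝ} {η : ℝ} {w0 : Vec d}

def sarahIndices {α : Type*} {S : ℕ} (a : α) (ω : Fin S → Fin m → α) : ℕ → ℕ → α :=
  fun s t => if h : s < S ∧ t < m then ω ⟨s, h.1⟩ ⟨t, h.2⟩ else a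

theorem sarahE_eq_sum {S : ℕ} (hn : 0 < n) (X : (ℕ → ℕ → Fin n) → ℝ) :
    sarahE n m S hn X = (∑ ω : Fin S → Fin m → Fin n, X (sarahIndices ⟨0, hn⟩ ω))
      / Fintype.card (Fin S → Fin m → Fin n) :=
  rfl

theorem sarahIndices_last {α : Type*} {s : ℕ} (a : α) (ω : Fin (s + 1) → Fin m → α) :
    sarahIndices a ω s = padIndex a (ω (Fin.last s)) := by
  funext t
  by_cases ht : t < m <;> simp [sarahIndices, padIndex, ht, Fin.last]

theorem sarahIndices_init {α : Type*} {s j : ℕ} (a : α) (ω : Fin (s + 1) → Fin m → α)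
    (hj : j < s) : sarahIndices a ω j = sarahIndices a (Fin.init ω) j := by
  funext t
  by_cases ht : t < m <;> simp [sarahIndices, Fin.init, ht, hj, hj.trans s.lt_succ_self]

theorem outerSeq_congr {ω ω' : ℕ → ℕ → Fin n} :
    ∀ {s : ℕ}, (∀ j < s, ω j = ω' j) →
      outerSeq d n m f F η w0 ω s = outerSeq d n m f F η w0 ω' s
  | 0, _ => rfl
  | s + 1, h => by
    simp only [outerSeq, h s s.lt_succ_self,
      outerSeq_congr fun j hj => h j (hj.trans s.lt_succ_self)]

theorem sarahE_succ_eq (hn : 0 < n) (s : ℕ) (G : Vec d → (ℕ → Fin n) → ℝ) :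
    sarahE n m (s + 1) hn (fun ω => G (outerSeq d n m f F η w0 ω s) (ω s))
      = (∑ p : Fin s → Fin m → Fin n, ∑ σ : Fin m → Fin n,
          G (outerSeq d n m f F η w0 (sarahIndices ⟨0, hn⟩ p) s) (padIndex ⟨0, hn⟩ σ))
        / Fintype.card (Fin (s + 1) → Fin m → Fin n) := by
  rw [sarahE_eq_sum, ← Fin.sum_init_last fun p σ =>
    G (outerSeq d n m f F η w0 (sarahIndices ⟨0, hn⟩ p) s) (padIndex ⟨0, hn⟩ σ)]
  congr 1
  refine sum_congr rfl fun ω _ => ?_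
  rw [sarahIndices_last, outerSeq_congr fun j hj => sarahIndices_init _ ω hj]

end OuterLoop

/-- **Single outer-loop descent of SARAH** (Statement 0, Lemma 1 of the paper).
Under average-`L`-smoothness and `0 < η ≤ 2/(L(√(1+4m)+1))`, every outer loop `s ≥ 1`
(here 0-indexed: the `(s+1)`-st outer loop) of SARAH satisfies
`E[F(w_{m+1}^{(s)})] ≤ E[F(w_0^{(s)})] - (η/2) Σ_{t=0}^m E[‖∇F(w_t^{(s)})‖²]`. -/
theorem sarah_single_outer_loop_descent
    (d n m : ℕ) (hn : 0 < n)
    (f : Fin n → Vec d → ℝ) (F : Vec d → ℝ)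
    (hF : ∀ w, F w = (∑ i, f i w) / n)
    (hdiff : ∀ i, Differentiable ℝ (f i))
    (L η : ℝ) (hL : 0 < L)
    (havg : ∀ w w' : Vec d,
      (∑ i, ‖gradient (f i) w - gradient (f i) w'‖ ^ 2) / n ≤ L ^ 2 * ‖w - w'‖ ^ 2)
    (hη0 : 0 < η) (hη : η ≤ 2 / (L * (Real.sqrt (1 + 4 * (m : ℝ)) + 1)))
    (w0 : Vec d) (s : ℕ) :
    sarahE n m (s + 1) hn (fun ω =>
        F (innerSeq d n f F η (outerSeq d n m f F η w0 ω s) (ω s) (m + 1)).1)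
      ≤ sarahE n m (s + 1) hn (fun ω =>
            F (innerSeq d n f F η (outerSeq d n m f F η w0 ω s) (ω s) 0).1)
        - η / 2 * ∑ t ∈ Finset.range (m + 1),
            sarahE n m (s + 1) hn (fun ω =>
              ‖gradient F (innerSeq d n f F η (outerSeq d n m f F η w0 ω s) (ω s) t).1‖ ^ 2) := by
  rw [sarahE_succ_eq hn s (fun x ι => F (innerSeq d n f F η x ι (m + 1)).1),
    sarahE_succ_eq hn s (fun x ι => F (innerSeq d n f F η x ι 0).1),
    sum_congr rfl fun t _ =>
      sarahE_succ_eq hn s (fun x ι => ‖gradient F (innerSeq d n f F η x ι t).1‖ ^ 2),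
    ← sum_div, mul_div_assoc', ← sub_div]
  refine div_le_div_of_nonneg_right ?_ (Nat.cast_nonneg _)
  rw [sum_comm (s := range (m + 1)), mul_sum, ← sum_sub_distrib]
  exact sum_le_sum fun p _ => sum_apply_innerSeq_le hF hdiff hL havg hη0 hη ⟨0, hn⟩

end
end

section
/- Let n, b, m be real numbers with n > 1, 1 ≤ b ≤ m and b·m = n. Then ((n + 2bm)/(m + 1)) · √(1 + (4m/b)·((n − b)/(n − 1))) ≤ 6√2 · √n. -/
/-- **Key deterministic estimate for the mini-batch SARAH complexity** (Statement 6).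
If `n > 1`, `1 ≤ b ≤ m` and `b·m = n` (real numbers), then
`((n + 2bm)/(m+1)) · √(1 + (4m/b)·((n-b)/(n-1))) ≤ 6√2·√n`. -/
theorem sarah_minibatch_cost_bound (n b m : ℝ) (hn : 1 < n) (hb : 1 ≤ b) (hbm : b ≤ m)
    (h : b * m = n) :
    (n + 2 * b * m) / (m + 1) * Real.sqrt (1 + 4 * m / b * ((n - b) / (n - 1)))
      ≤ 6 * Real.sqrt 2 * Real.sqrt n := by
  have hb0 : (0:ℝ) < b := lt_of_lt_of_le one_pos hb
  have hm0 : (0:ℝ) < m := lt_of_lt_of_le hb0 hbm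
  have hm1 : (0:ℝ) < m + 1 := by linarith
  have hn1 : (0:ℝ) < n - 1 := by linarith
  -- first factor bound
  have h1 : (n + 2 * b * m) / (m + 1) ≤ 3 * b := by
    rw [div_le_iff₀ hm1]
    nlinarith
  -- inner sqrt bound
  have hr1 : (n - b) / (n - 1) ≤ 1 := by
    rw [div_le_one hn1]; linarith
  have hr0 : 0 ≤ (n - b) / (n - 1) := by
    apply div_nonneg _ (le_of_lt hn1)
    nlinarith
  have hmb : (1:ℝ) ≤ m / b := (one_le_div hb0).mpr hbm
  have h2 : 1 + 4 * m / b * ((n - b) / (n - 1)) ≤ 8 * m / b := by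
    have h4 : 4 * m / b * ((n - b) / (n - 1)) ≤ 4 * m / b := by
      apply mul_le_of_le_one_right _ hr1
      positivity
    have h5 : (1:ℝ) + 4 * (m / b) ≤ 8 * (m / b) := by linarith
    calc 1 + 4 * m / b * ((n - b) / (n - 1)) ≤ 1 + 4 * m / b := by linarith
      _ ≤ 8 * m / b := by rw [mul_div_assoc, mul_div_assoc]; linarith [h5]
  have h3 : Real.sqrt (1 + 4 * m / b * ((n - b) / (n - 1))) ≤ Real.sqrt (8 * m / b) :=
    Real.sqrt_le_sqrt h2
  have key : 3 * b * Real.sqrt (8 * m / b) = 6 * Real.sqrt 2 * Real.sqrt n := by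
    have e1 : 3 * b * Real.sqrt (8 * m / b) = Real.sqrt (72 * n) := by
      rw [show (3 * b : ℝ) = Real.sqrt ((3 * b) ^ 2) from (Real.sqrt_sq (by positivity)).symm,
        ← Real.sqrt_mul (by positivity)]
      congr 1
      field_simp
      nlinarith
    have e2 : 6 * Real.sqrt 2 * Real.sqrt n = Real.sqrt (72 * n) := by
      rw [show (6:ℝ) = Real.sqrt 36 by
        rw [show (36:ℝ) = 6 ^ 2 by norm_num, Real.sqrt_sq]; norm_num]
      rw [← Real.sqrt_mul (by norm_num), ← Real.sqrt_mul (by norm_num)]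
      norm_num
    rw [e1, e2]
  calc (n + 2 * b * m) / (m + 1) * Real.sqrt (1 + 4 * m / b * ((n - b) / (n - 1)))
      ≤ 3 * b * Real.sqrt (8 * m / b) := by
        apply mul_le_mul h1 h3 (Real.sqrt_nonneg _) (by positivity)
    _ = 6 * Real.sqrt 2 * Real.sqrt n := key
end
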